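/- Let h: ℝⁿ × ℝⁿ × ℝ → ℝ and ℓ: ℝⁿ × ℝⁿ × ℝ → ℝ be smooth, with ℓ hyperregular (λ_ℓ(x,v,t) = (x, ∂ℓ/∂v, ∂ℓ/∂t) a diffeomorphism), and suppose h(x, p, z) = ⟨p, v⟩ + tz - ℓ(x, v, t) where (v, t) = λ_ℓ⁻¹ in the fiber over x. Then for every (x, v, t), setting (p, z) = (∂ℓ/∂v, ∂ℓ/∂t), the tuple (ẋ, ṗ, ż) defined by the contact Hamilton equations ẋ = ∂h/∂p, ṗ = -∂h/∂x - p·∂h/∂z, ż = ⟨p, ∂h/∂p⟩ - h coincides with the tuple defined by the contact Euler–Lagrange data ẋ = v, ṗ = ∂ℓ/∂x - t·∂ℓ/∂v, ż = ℓ - t·∂ℓ/∂t. -/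

import Mathlib

noncomputable section

/-- The extended configuration/phase space with coordinates `(x, v, t)`
(resp. `(x, p, z)`). -/
abbrev W13 (n : ℕ) := (Fin n → ℝ) × (Fin n → ℝ) × ℝ

/-- The fiberwise Legendre map `λ_ℓ(x, v, t) = (x, ∂ℓ/∂v, ∂ℓ/∂t)`. -/
def legMap13 (n : ℕ) (ℓ : W13 n → ℝ) : W13 n → W13 n :=
  fun w =>
    (w.1,
     fun i => fderiv ℝ ℓ w ((0 : Fin n → ℝ), Pi.single i (1 : ℝ), (0 : ℝ)),
     fderiv ℝ ℓ w ((0 : Fin n → ℝ), (0 : Fin n → ℝ), (1 : ℝ)))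

/-- `h(x, p, z) = ⟨p, v⟩ + t·z - ℓ(x, v, t)` with `(x, v, t) = g(x, p, z) = λ_ℓ⁻¹(x,p,z)`. -/
def hamOf13 (n : ℕ) (ℓ : W13 n → ℝ) (g : W13 n → W13 n) : W13 n → ℝ :=
  fun w => (∑ i, w.2.1 i * (g w).2.1 i) + (g w).2.2 * w.2.2 - ℓ (g w)

/-! ### Auxiliary material -/

lemma smul_vec (n : ℕ) (r : ℝ) (x : W13 n) :
    r • x = (r • x.1, r • x.2.1, r • x.2.2) := rfl

lemma L_decomp (n : ℕ) (L : W13 n →L[ℝ] ℝ) (a b : Fin n → ℝ) (c : ℝ) :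
    L (a, b, c) = L (a, 0, 0) + (∑ i, b i * L (0, Pi.single i 1, 0)) + c * L (0, 0, 1) := by
  have key : ∀ i, L ((0 : Fin n → ℝ), b i • (Pi.single i (1:ℝ) : Fin n → ℝ), (0:ℝ))
      = b i * L (0, Pi.single i 1, 0) := by
    intro i
    rw [show (((0 : Fin n → ℝ), b i • (Pi.single i (1:ℝ) : Fin n → ℝ), (0:ℝ)) : W13 n)
        = b i • (((0 : Fin n → ℝ), Pi.single i (1:ℝ), (0:ℝ)) : W13 n) by
      rw [smul_vec]; simp, map_smul, smul_eq_mul]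
  have h1 : ((a, b, c) : W13 n) = (a, 0, 0) + ((0, b, 0) + (0, 0, c)) := by
    ext <;> simp
  have h2 : ((0, b, (0:ℝ)) : W13 n)
      = ∑ i, (((0 : Fin n → ℝ), b i • (Pi.single i (1:ℝ) : Fin n → ℝ), (0:ℝ)) : W13 n) := by
    ext j
    · simp [Prod.fst_sum]
    · simp [Prod.snd_sum, Prod.fst_sum, Finset.sum_apply, Pi.single_apply, mul_comm]
    · simp [Prod.snd_sum]
  have h3 : ((0, (0: Fin n → ℝ), c) : W13 n)
      = c • ((((0:Fin n → ℝ), (0:Fin n → ℝ), (1:ℝ))) : W13 n) := by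
    rw [smul_vec]; simp
  rw [h1, map_add, map_add, h2, h3, map_sum, map_smul]
  simp [smul_eq_mul, add_assoc, key]

section main
variable (n : ℕ)

/-- coordinate CLM for `p i` -/
def pC (i : Fin n) : W13 n →L[ℝ] ℝ :=
  (ContinuousLinearMap.proj i).comp
    ((ContinuousLinearMap.fst ℝ (Fin n → ℝ) ℝ).comp
      (ContinuousLinearMap.snd ℝ (Fin n → ℝ) ((Fin n → ℝ) × ℝ)))

/-- coordinate CLM for `z` -/
def zC : W13 n →L[ℝ] ℝ :=
  (ContinuousLinearMap.snd ℝ (Fin n → ℝ) ℝ).comp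
    (ContinuousLinearMap.snd ℝ (Fin n → ℝ) ((Fin n → ℝ) × ℝ))

theorem ham_fderiv_apply (ℓ : W13 n → ℝ) (hℓ : ContDiff ℝ (⊤ : ℕ∞) ℓ)
    (g : W13 n → W13 n) (hg : ContDiff ℝ (⊤ : ℕ∞) g)
    (hgl : Function.LeftInverse g (legMap13 n ℓ))
    (hgr : Function.RightInverse g (legMap13 n ℓ))
    (u δ : W13 n) :
    fderiv ℝ (hamOf13 n ℓ g) (legMap13 n ℓ u) δ
      = (∑ i, δ.2.1 i * u.2.1 i) + u.2.2 * δ.2.2 - fderiv ℝ ℓ u (δ.1, 0, 0) := by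
  set w := legMap13 n ℓ u with hw
  have hgw : g w = u := hgl u
  set G := fderiv ℝ g w with hGdef
  have hG : HasFDerivAt g G w := (hg.differentiable (by simp) w).hasFDerivAt
  set L := fderiv ℝ ℓ u with hLdef
  have hL : HasFDerivAt ℓ L (g w) := by
    rw [hgw]; exact (hℓ.differentiable (by simp) u).hasFDerivAt
  have hpi : ∀ i : Fin n, HasFDerivAt (fun w' : W13 n => w'.2.1 i) (pC n i) w :=
    fun i => (pC n i).hasFDerivAt
  have hgpi : ∀ i : Fin n, HasFDerivAt (fun w' : W13 n => (g w').2.1 i)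
      ((pC n i).comp G) w := fun i => ((pC n i).hasFDerivAt.comp w hG)
  have hz : HasFDerivAt (fun w' : W13 n => w'.2.2) (zC n) w := (zC n).hasFDerivAt
  have hgz : HasFDerivAt (fun w' : W13 n => (g w').2.2) ((zC n).comp G) w :=
    (zC n).hasFDerivAt.comp w hG
  have hS : HasFDerivAt (fun w' : W13 n => ∑ i, w'.2.1 i * (g w').2.1 i)
      (∑ i, (w.2.1 i • ((pC n i).comp G) + (g w).2.1 i • pC n i)) w := by
    exact HasFDerivAt.fun_sum fun i _ => (hpi i).mul (hgpi i)
  have hT : HasFDerivAt (fun w' : W13 n => (g w').2.2 * w'.2.2)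
      ((g w).2.2 • zC n + w.2.2 • ((zC n).comp G)) w := hgz.mul hz
  have hLg : HasFDerivAt (fun w' : W13 n => ℓ (g w')) (L.comp G) w := hL.comp w hG
  have hH : HasFDerivAt (hamOf13 n ℓ g)
      ((∑ i, (w.2.1 i • ((pC n i).comp G) + (g w).2.1 i • pC n i))
        + ((g w).2.2 • zC n + w.2.2 • ((zC n).comp G)) - L.comp G) w :=
    (hS.add hT).sub hLg
  rw [hH.fderiv]
  have hGfst : (G δ).1 = δ.1 := by
    have hfst0 : ∀ w' : W13 n, (g w').1 = w'.1 := fun w' => by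
      rw [show (g w').1 = (legMap13 n ℓ (g w')).1 from rfl, hgr w']
    have hfst : (fun w' : W13 n => (g w').1) = Prod.fst := funext fun w' => hfst0 w'
    have h1 : HasFDerivAt (fun w' : W13 n => (g w').1)
        ((ContinuousLinearMap.fst ℝ (Fin n → ℝ) ((Fin n → ℝ) × ℝ)).comp G) w :=
      (ContinuousLinearMap.fst ℝ (Fin n → ℝ) ((Fin n → ℝ) × ℝ)).hasFDerivAt.comp w hG
    rw [hfst] at h1
    have h2 := h1.unique
      (ContinuousLinearMap.fst ℝ (Fin n → ℝ) ((Fin n → ℝ) × ℝ)).hasFDerivAt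
    exact DFunLike.congr_fun h2 δ
  have hLp : ∀ i : Fin n, L ((0 : Fin n → ℝ), Pi.single i (1:ℝ), (0:ℝ)) = w.2.1 i := by
    intro i; rw [hw]; rfl
  have hLz : L ((0 : Fin n → ℝ), (0 : Fin n → ℝ), (1:ℝ)) = w.2.2 := by rw [hw]; rfl
  have hLG : L (G δ) = L (δ.1, 0, 0) + (∑ i, (G δ).2.1 i * w.2.1 i)
      + (G δ).2.2 * w.2.2 := by
    rw [show G δ = ((G δ).1, (G δ).2.1, (G δ).2.2) from rfl, L_decomp, hGfst, hLz]
    simp [hLp]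
  simp only [ContinuousLinearMap.sub_apply, ContinuousLinearMap.add_apply,
    ContinuousLinearMap.sum_apply, ContinuousLinearMap.smul_apply,
    ContinuousLinearMap.comp_apply, smul_eq_mul, hgw, hLG]
  have hpC : ∀ i (x : W13 n), pC n i x = x.2.1 i := fun _ _ => rfl
  have hzC : ∀ x : W13 n, zC n x = x.2.2 := fun _ => rfl
  simp only [hpC, hzC, Finset.sum_add_distrib]
  have e1 : ∑ i, w.2.1 i * (G δ).2.1 i = ∑ i, (G δ).2.1 i * w.2.1 i :=
    Finset.sum_congr rfl fun i _ => mul_comm _ _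
  have e2 : ∑ i, u.2.1 i * δ.2.1 i = ∑ i, δ.2.1 i * u.2.1 i :=
    Finset.sum_congr rfl fun i _ => mul_comm _ _
  rw [e1, e2]
  ring
end main

/-- Coincidence of contact Hamiltonian and Lagrangian dynamics under the Legendre
transformation: for a hyperregular `ℓ` with inverse Legendre map `g` and
`h = ⟨p,v⟩ + tz - ℓ` (via `g`), at every `(x, v, t)` with `(p, z) = (∂ℓ/∂v, ∂ℓ/∂t)`,
the tuple `(ẋ, ṗ, ż)` given by the contact Hamilton equations
`ẋ = ∂h/∂p`, `ṗ = -∂h/∂x - p·∂h/∂z`, `ż = ⟨p, ∂h/∂p⟩ - h`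
coincides with the contact Euler–Lagrange data
`ẋ = v`, `ṗ = ∂ℓ/∂x - t·∂ℓ/∂v`, `ż = ℓ - t·∂ℓ/∂t`. -/
theorem contact_dynamics_coincide (n : ℕ) (ℓ : W13 n → ℝ) (hℓ : ContDiff ℝ (⊤ : ℕ∞) ℓ)
    (g : W13 n → W13 n) (hg : ContDiff ℝ (⊤ : ℕ∞) g)
    (hgl : Function.LeftInverse g (legMap13 n ℓ))
    (hgr : Function.RightInverse g (legMap13 n ℓ)) :
    ∀ u : W13 n,
      let h := hamOf13 n ℓ g
      let w := legMap13 n ℓ u  -- (x, p, z)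
      (∀ i : Fin n,
        fderiv ℝ h w ((0 : Fin n → ℝ), Pi.single i (1 : ℝ), (0 : ℝ)) = u.2.1 i) ∧
      (∀ j : Fin n,
        -(fderiv ℝ h w (Pi.single j (1 : ℝ), (0 : Fin n → ℝ), (0 : ℝ)))
            - w.2.1 j * fderiv ℝ h w ((0 : Fin n → ℝ), (0 : Fin n → ℝ), (1 : ℝ))
          = fderiv ℝ ℓ u (Pi.single j (1 : ℝ), (0 : Fin n → ℝ), (0 : ℝ))
            - u.2.2 * fderiv ℝ ℓ u ((0 : Fin n → ℝ), Pi.single j (1 : ℝ), (0 : ℝ))) ∧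
      ((∑ k, w.2.1 k * fderiv ℝ h w ((0 : Fin n → ℝ), Pi.single k (1 : ℝ), (0 : ℝ)))
          - h w
        = ℓ u - u.2.2 * fderiv ℝ ℓ u ((0 : Fin n → ℝ), (0 : Fin n → ℝ), (1 : ℝ))) := by
  intro u
  intro h w
  have key := ham_fderiv_apply n ℓ hℓ g hg hgl hgr u
  have hL0 : fderiv ℝ ℓ u ((0:Fin n → ℝ), (0:Fin n → ℝ), (0:ℝ)) = 0 := by
    rw [show (((0:Fin n → ℝ), (0:Fin n → ℝ), (0:ℝ)) : W13 n) = 0 from rfl]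
    exact map_zero _
  have g1 : ∀ i : Fin n,
      fderiv ℝ (hamOf13 n ℓ g) (legMap13 n ℓ u)
        ((0 : Fin n → ℝ), Pi.single i (1 : ℝ), (0 : ℝ)) = u.2.1 i := by
    intro i
    rw [key ((0 : Fin n → ℝ), Pi.single i (1 : ℝ), (0 : ℝ))]
    simp [Pi.single_apply, ite_mul, hL0]
  refine ⟨g1, ?_, ?_⟩
  · intro j
    show -(fderiv ℝ (hamOf13 n ℓ g) (legMap13 n ℓ u)
            (Pi.single j (1 : ℝ), (0 : Fin n → ℝ), (0 : ℝ)))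
          - (legMap13 n ℓ u).2.1 j * fderiv ℝ (hamOf13 n ℓ g) (legMap13 n ℓ u)
            ((0 : Fin n → ℝ), (0 : Fin n → ℝ), (1 : ℝ)) = _
    rw [key, key]
    simp only [Pi.zero_apply, zero_mul, Finset.sum_const_zero, mul_zero, mul_one, hL0]
    have e : (legMap13 n ℓ u).2.1 j = fderiv ℝ ℓ u ((0:Fin n → ℝ), Pi.single j (1:ℝ), (0:ℝ)) := rfl
    rw [e]
    ring
  · show (∑ k, (legMap13 n ℓ u).2.1 k * fderiv ℝ (hamOf13 n ℓ g) (legMap13 n ℓ u)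
        ((0 : Fin n → ℝ), Pi.single k (1 : ℝ), (0 : ℝ)))
        - hamOf13 n ℓ g (legMap13 n ℓ u) = _
    simp only [g1, hamOf13, hgl u]
    have e2 : u.2.2 * fderiv ℝ ℓ u ((0:Fin n → ℝ), (0:Fin n → ℝ), (1:ℝ))
        = u.2.2 * (legMap13 n ℓ u).2.2 := rfl
    rw [e2]
    ring
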